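/- Overlap identity for optimal decompositions: if ρ = Σᵢ pᵢ|ψᵢ⟩⟨ψᵢ| with |ψᵢ⟩ = cos α|aᵢbᵢ⟩ + sin α|aᵢ⊥bᵢ⊥⟩ and |φᵢ⟩ = cos β̃|aᵢbᵢ⟩ + sin β̃|aᵢ⊥bᵢ⊥⟩, then with ρ_min = Σᵢ qᵢ|φᵢ⟩⟨φᵢ|, qᵢ = pᵢ|⟨ψᵢ|φᵢ⟩|²/Σₖ pₖ|⟨ψₖ|φₖ⟩|², one has √F(ρ, ρ_min) ≥ Σᵢ √(pᵢ qᵢ) |⟨ψᵢ|φᵢ⟩| = √(Σᵢ pᵢ |⟨ψᵢ|φᵢ⟩|²) = |cos(α − β̃)|. -/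

import Mathlib

open Matrix
open scoped ComplexOrder Kronecker

noncomputable section

/-- A density operator: positive semidefinite with unit trace. -/
def IsDensity {d : Type*} [Fintype d] [DecidableEq d] (ρ : Matrix d d ℂ) : Prop :=
  ρ.PosSemidef ∧ ρ.trace = 1

open Classical in
/-- Square root of a positive semidefinite matrix (junk value `0` otherwise). -/
noncomputable def matSqrt {d : Type*} [Fintype d] [DecidableEq d] (A : Matrix d d ℂ) :
    Matrix d d ℂ :=
  if h : A.PosSemidef then
    h.1.eigenvectorUnitary.1 * diagonal ((↑) ∘ Real.sqrt ∘ h.1.eigenvalues) *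
      (star h.1.eigenvectorUnitary : Matrix d d ℂ)
  else 0

/-- Uhlmann fidelity `F(ρ,σ) = (Tr √(√ρ σ √ρ))²`. -/
noncomputable def fid {d : Type*} [Fintype d] [DecidableEq d] (ρ σ : Matrix d d ℂ) : ℝ :=
  ((matSqrt (matSqrt ρ * σ * matSqrt ρ)).trace.re) ^ 2

/-- Bures angle `D(ρ,σ) = arccos √F(ρ,σ)`. -/
noncomputable def bures {d : Type*} [Fintype d] [DecidableEq d] (ρ σ : Matrix d d ℂ) : ℝ :=
  Real.arccos (Real.sqrt (fid ρ σ))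

abbrev Q1 := Matrix (Fin 2) (Fin 2) ℂ
abbrev Q2 := Matrix (Fin 2 × Fin 2) (Fin 2 × Fin 2) ℂ

/-- Separable two-qubit states: convex combinations of product states. -/
def SepState (σ : Q2) : Prop :=
  ∃ (m : ℕ) (p : Fin m → ℝ) (a b : Fin m → Q1),
    (∀ i, 0 ≤ p i) ∧ (∑ i, p i) = 1 ∧ (∀ i, IsDensity (a i)) ∧ (∀ i, IsDensity (b i)) ∧
    σ = ∑ i, p i • (a i ⊗ₖ b i)

/-- Geometric entanglement of a two-qubit state. -/
noncomputable def G2 (ρ : Q2) : ℝ := 1 - sSup {x : ℝ | ∃ σ, SepState σ ∧ x = fid ρ σ}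

/-! By orthonormality of the Schmidt pairs every overlap `⟨ψᵢ|φᵢ⟩` equals `cos (α - β̃)`. The
identity `Σ √(pᵢ qᵢ) xᵢ = √(Σ pᵢ xᵢ²)` holds for arbitrary overlaps `xᵢ ≥ 0`, because each term is
`pᵢ xᵢ² / √(Σ pⱼ xⱼ²)`. The inequality is the matched-ensemble bound
`|tr (Aᴴ B)| ≤ √F(A Aᴴ, B Bᴴ)` for the matrices `A`, `B` with columns `√pᵢ ψᵢ` and `√qᵢ φᵢ`. It
follows from `|tr M| ≤ tr √(Mᴴ M)` and `tr √(Xᴴ X) = tr √(X Xᴴ)`; the latter holds because on the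
finite joint spectrum `√` agrees with a polynomial without constant term, and
`tr ((Xᴴ X)ᵏ) = tr ((X Xᴴ)ᵏ)` for `k ≥ 1`. -/

open Polynomial
open scoped InnerProductSpace

namespace Matrix

variable {k n : Type*} [Fintype k] [Fintype n] [DecidableEq k] [DecidableEq n]

lemma mul_mul_pow_eq_pow_mul {R : Type*} [CommSemiring R] (A : Matrix k n R) (B : Matrix n k R)
    (j : ℕ) : B * (A * B) ^ j = (B * A) ^ j * B := by
  induction j with
  | zero => simp
  | succ j ih => rw [pow_succ, pow_succ, ← Matrix.mul_assoc, ih]; simp only [Matrix.mul_assoc]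

lemma trace_mul_pow_succ_comm {R : Type*} [CommSemiring R] (A : Matrix k n R) (B : Matrix n k R)
    (j : ℕ) : ((A * B) ^ (j + 1)).trace = ((B * A) ^ (j + 1)).trace := by
  rw [pow_succ', Matrix.mul_assoc, trace_mul_comm, mul_mul_pow_eq_pow_mul, Matrix.mul_assoc,
    ← pow_succ]

lemma trace_aeval_mul_comm {R S : Type*} [CommSemiring R] [CommSemiring S] [Algebra R S]
    (p : R[X]) (hp : p.coeff 0 = 0) (A : Matrix k n S) (B : Matrix n k S) :
    (aeval (A * B) p).trace = (aeval (B * A) p).trace := by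
  simp only [aeval_eq_sum_range, trace_sum, trace_smul]
  refine Finset.sum_congr rfl fun j _ => ?_
  cases j with
  | zero => simp [hp]
  | succ j => rw [trace_mul_pow_succ_comm]

lemma trace_cfc_conjTranspose_mul_self (f : ℝ → ℝ) (hf : f 0 = 0) (C : Matrix k n ℂ) :
    (cfc f (Cᴴ * C)).trace = (cfc f (C * Cᴴ)).trace := by
  obtain ⟨p, hp⟩ : ∃ p : ℝ[X], Set.EqOn f (fun x => p.eval x)
      (spectrum ℝ (Cᴴ * C) ∪ spectrum ℝ (C * Cᴴ) ∪ {0}) := by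
    classical
    have hfin := ((finite_real_spectrum (A := Cᴴ * C)).union
      (finite_real_spectrum (A := C * Cᴴ))).union (Set.finite_singleton 0)
    exact ⟨Lagrange.interpolate hfin.toFinset id f, fun x hx =>
      (Lagrange.eval_interpolate_at_node f (Set.injOn_id _) (hfin.mem_toFinset.mpr hx)).symm⟩
  have hp0 : p.coeff 0 = 0 := by
    rw [coeff_zero_eq_eval_zero]
    exact (hp (x := 0) (by simp)).symm.trans hf
  rw [cfc_congr (hp.mono (by intro x hx; simp [hx])),
    cfc_congr (hp.mono (by intro x hx; simp [hx])),
    cfc_polynomial p _ (isHermitian_conjTranspose_mul_self C).isSelfAdjoint,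
    cfc_polynomial p _ (isHermitian_mul_conjTranspose_self C).isSelfAdjoint]
  exact trace_aeval_mul_comm p hp0 _ _

lemma IsHermitian.trace_cfc {A : Matrix n n ℂ} (hA : A.IsHermitian) (f : ℝ → ℝ) :
    (cfc f A).trace = ∑ i, (f (hA.eigenvalues i) : ℂ) := by
  rw [hA.cfc_eq, IsHermitian.cfc, Unitary.conjStarAlgAut_apply, trace_mul_cycle,
    Unitary.coe_star_mul_self, Matrix.one_mul, trace_diagonal]
  rfl

lemma PosSemidef.cfc_sqrt_mul_self {A : Matrix n n ℂ} (hA : A.PosSemidef) :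
    cfc Real.sqrt A * cfc Real.sqrt A = A := by
  rw [← cfc_mul Real.sqrt Real.sqrt A]
  conv_rhs => rw [← cfc_id' ℝ A hA.1.isSelfAdjoint]
  refine cfc_congr fun x hx => ?_
  obtain ⟨i, rfl⟩ := hA.1.spectrum_real_eq_range_eigenvalues ▸ hx
  exact Real.mul_self_sqrt (hA.eigenvalues_nonneg i)

lemma trace_toLpLin (M : Matrix n n ℂ) : LinearMap.trace ℂ _ (toLpLin 2 2 M) = M.trace := by
  rw [toLpLin_eq_toLin, LinearMap.trace_eq_matrix_trace ℂ (PiLp.basisFun 2 ℂ n),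
    LinearMap.toMatrix_toLin]

lemma norm_mulVec_eigenvectorBasis_conjTranspose_mul_self (M : Matrix n n ℂ) (j : n) :
    ‖WithLp.toLp 2 (M *ᵥ ((isHermitian_conjTranspose_mul_self M).eigenvectorBasis j).ofLp)‖
      = √((isHermitian_conjTranspose_mul_self M).eigenvalues j) := by
  set hH := isHermitian_conjTranspose_mul_self M
  set u := hH.eigenvectorBasis j
  have hu : star u.ofLp ⬝ᵥ u.ofLp = 1 := by
    rw [dotProduct_comm, ← EuclideanSpace.inner_eq_star_dotProduct, inner_self_eq_norm_sq_to_K,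
      hH.eigenvectorBasis.norm_eq_one]
    simp
  have hsq : ‖WithLp.toLp 2 (M *ᵥ u.ofLp)‖ ^ 2 = hH.eigenvalues j := by
    rw [← RCLike.ofReal_inj (K := ℂ), RCLike.ofReal_pow, ← inner_self_eq_norm_sq_to_K,
      EuclideanSpace.inner_eq_star_dotProduct, dotProduct_comm, star_mulVec, ← dotProduct_mulVec,
      mulVec_mulVec, hH.mulVec_eigenvectorBasis, dotProduct_smul, hu]
    simp
  rw [← hsq, Real.sqrt_sq (norm_nonneg _)]

/-- Expand the trace in an eigenbasis `uⱼ` of `Mᴴ M`: `|⟨uⱼ, M uⱼ⟩| ≤ ‖M uⱼ‖ = √λⱼ`. -/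
lemma norm_trace_le_trace_cfc_sqrt (M : Matrix n n ℂ) :
    ‖M.trace‖ ≤ (cfc Real.sqrt (Mᴴ * M)).trace.re := by
  set b := (isHermitian_conjTranspose_mul_self M).eigenvectorBasis
  rw [(isHermitian_conjTranspose_mul_self M).trace_cfc, Complex.re_sum]
  calc ‖M.trace‖ = ‖∑ j, ⟪b j, WithLp.toLp 2 (M *ᵥ (b j).ofLp)⟫_ℂ‖ := by
        rw [← trace_toLpLin, LinearMap.trace_eq_sum_inner _ b]
        rfl
    _ ≤ ∑ j, ‖b j‖ * ‖WithLp.toLp 2 (M *ᵥ (b j).ofLp)‖ :=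
        (norm_sum_le _ _).trans (Finset.sum_le_sum fun j _ => norm_inner_le_norm _ _)
    _ = _ := by
        simp only [b.norm_eq_one, one_mul, Complex.ofReal_re]
        exact Finset.sum_congr rfl fun j _ =>
          norm_mulVec_eigenvectorBasis_conjTranspose_mul_self M j

end Matrix

lemma matSqrt_eq_cfc_sqrt {d : Type*} [Fintype d] [DecidableEq d] {A : Matrix d d ℂ}
    (hA : A.PosSemidef) : matSqrt A = cfc Real.sqrt A := by
  rw [matSqrt, dif_pos hA, hA.1.cfc_eq, IsHermitian.cfc, Unitary.conjStarAlgAut_apply]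
  rfl

theorem norm_trace_conjTranspose_mul_le_sqrt_fid {d m : Type*} [Fintype d] [DecidableEq d]
    [Fintype m] [DecidableEq m] (A B : Matrix d m ℂ) :
    ‖(Aᴴ * B).trace‖ ≤ √(fid (A * Aᴴ) (B * Bᴴ)) := by
  have hAA := posSemidef_self_mul_conjTranspose A
  set R := cfc Real.sqrt (A * Aᴴ)
  have hR : Rᴴ = R := cfc_predicate (p := IsSelfAdjoint) Real.sqrt (A * Aᴴ)
  have hRBR : (R * (B * Bᴴ) * R).PosSemidef := by
    simpa only [hR] using (posSemidef_self_mul_conjTranspose B).mul_mul_conjTranspose_same R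
  have hleft : (Aᴴ * B)ᴴ * (Aᴴ * B) = (R * B)ᴴ * (R * B) := by
    rw [conjTranspose_mul, conjTranspose_mul, conjTranspose_conjTranspose, hR, Matrix.mul_assoc,
      ← Matrix.mul_assoc A, ← hAA.cfc_sqrt_mul_self]
    simp only [Matrix.mul_assoc]
    rfl
  have hright : (R * B) * (R * B)ᴴ = R * (B * Bᴴ) * R := by
    rw [conjTranspose_mul, hR]
    simp only [Matrix.mul_assoc]
  calc ‖(Aᴴ * B).trace‖ ≤ (cfc Real.sqrt ((Aᴴ * B)ᴴ * (Aᴴ * B))).trace.re :=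
        norm_trace_le_trace_cfc_sqrt _
    _ = (matSqrt (matSqrt (A * Aᴴ) * (B * Bᴴ) * matSqrt (A * Aᴴ))).trace.re := by
        rw [hleft, trace_cfc_conjTranspose_mul_self _ Real.sqrt_zero, hright,
          matSqrt_eq_cfc_sqrt hAA, matSqrt_eq_cfc_sqrt hRBR]
    _ ≤ √(fid (A * Aᴴ) (B * Bᴴ)) := by
        rw [fid, Real.sqrt_sq_eq_abs]
        exact le_abs_self _

section Ensemble

variable {d m : Type*} [Fintype m]

def ensembleFactor (w : m → ℝ) (v : m → d → ℂ) : Matrix d m ℂ :=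
  Matrix.of fun x i => (√(w i) : ℂ) * v i x

lemma ensembleFactor_mul_conjTranspose {w : m → ℝ} (hw : ∀ i, 0 ≤ w i) (v : m → d → ℂ) :
    ensembleFactor w v * (ensembleFactor w v)ᴴ = ∑ i, w i • vecMulVec (v i) (star (v i)) := by
  ext x y
  simp only [mul_apply, Matrix.sum_apply, ensembleFactor, conjTranspose_apply, of_apply,
    Matrix.smul_apply, vecMulVec_apply, Pi.star_apply, star_mul', Complex.star_def,
    Complex.conj_ofReal, Complex.real_smul]
  refine Finset.sum_congr rfl fun i _ => ?_
  rw [show (w i : ℂ) = √(w i) * √(w i) by rw [← Complex.ofReal_mul, Real.mul_self_sqrt (hw i)]]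
  ring

lemma trace_conjTranspose_ensembleFactor_mul [Fintype d] {w w' : m → ℝ} (hw : ∀ i, 0 ≤ w i)
    (v v' : m → d → ℂ) :
    ((ensembleFactor w v)ᴴ * ensembleFactor w' v').trace
      = ∑ i, (√(w i * w' i) : ℂ) * (star (v i) ⬝ᵥ v' i) := by
  simp only [trace, diag_apply, mul_apply, ensembleFactor, conjTranspose_apply, of_apply,
    dotProduct, Finset.mul_sum, Pi.star_apply, star_mul', Complex.star_def, Complex.conj_ofReal,
    Real.sqrt_mul (hw _), Complex.ofReal_mul]
  exact Finset.sum_congr rfl fun i _ => Finset.sum_congr rfl fun x _ => by ring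

theorem norm_sum_sqrt_mul_dotProduct_le_sqrt_fid [Fintype d] [DecidableEq d] [DecidableEq m]
    {p q : m → ℝ} (hp : ∀ i, 0 ≤ p i) (hq : ∀ i, 0 ≤ q i) (ψ φ : m → d → ℂ) :
    ‖∑ i, (√(p i * q i) : ℂ) * (star (ψ i) ⬝ᵥ φ i)‖
      ≤ √(fid (∑ i, p i • vecMulVec (ψ i) (star (ψ i)))
          (∑ i, q i • vecMulVec (φ i) (star (φ i)))) := by
  rw [← trace_conjTranspose_ensembleFactor_mul hp, ← ensembleFactor_mul_conjTranspose hp,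
    ← ensembleFactor_mul_conjTranspose hq]
  exact norm_trace_conjTranspose_mul_le_sqrt_fid _ _

end Ensemble

lemma sum_sqrt_mul_reweighted_eq_sqrt_sum {ι : Type*} [Fintype ι] {p x : ι → ℝ}
    (hp : ∀ i, 0 ≤ p i) (hx : ∀ i, 0 ≤ x i) :
    ∑ i, √(p i * (p i * x i ^ 2 / ∑ j, p j * x j ^ 2)) * x i = √(∑ i, p i * x i ^ 2) := by
  set S := ∑ j, p j * x j ^ 2
  have hterm : ∀ i, √(p i * (p i * x i ^ 2 / S)) * x i = p i * x i ^ 2 / √S := fun i => by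
    rw [show p i * (p i * x i ^ 2 / S) = (p i * x i) ^ 2 / S by ring,
      Real.sqrt_div' _ (Finset.sum_nonneg fun j _ => mul_nonneg (hp j) (sq_nonneg (x j))),
      Real.sqrt_sq (mul_nonneg (hp i) (hx i))]
    ring
  rw [Finset.sum_congr rfl fun i _ => hterm i, ← Finset.sum_div]
  exact Real.div_sqrt

section Schmidt

variable {ι κ : Type*} [Fintype ι] [Fintype κ]

def schmidtVec (θ : ℝ) (a a' : ι → ℂ) (b b' : κ → ℂ) : ι × κ → ℂ :=
  fun x => (Real.cos θ : ℂ) * (a x.1 * b x.2) + (Real.sin θ : ℂ) * (a' x.1 * b' x.2)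

lemma star_prod_dotProduct_prod (a a' : ι → ℂ) (b b' : κ → ℂ) :
    star (fun x : ι × κ => a x.1 * b x.2) ⬝ᵥ (fun x => a' x.1 * b' x.2)
      = (star a ⬝ᵥ a') * (star b ⬝ᵥ b') := by
  simp only [dotProduct, Fintype.sum_prod_type, Finset.sum_mul_sum, Pi.star_apply, star_mul']
  exact Finset.sum_congr rfl fun i _ => Finset.sum_congr rfl fun j _ => by ring

lemma star_schmidtVec_dotProduct_schmidtVec {a a' : ι → ℂ} {b b' : κ → ℂ}
    (ha : star a ⬝ᵥ a = 1) (ha' : star a' ⬝ᵥ a' = 1) (haa' : star a ⬝ᵥ a' = 0)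
    (hb : star b ⬝ᵥ b = 1) (hb' : star b' ⬝ᵥ b' = 1) (hbb' : star b ⬝ᵥ b' = 0) (θ θ' : ℝ) :
    star (schmidtVec θ a a' b b') ⬝ᵥ schmidtVec θ' a a' b b' = (Real.cos (θ - θ') : ℂ) := by
  have hsplit : ∀ t, schmidtVec t a a' b b'
      = (Real.cos t : ℂ) • (fun x : ι × κ => a x.1 * b x.2)
        + (Real.sin t : ℂ) • (fun x : ι × κ => a' x.1 * b' x.2) := fun _ => rfl
  have ha'a : star a' ⬝ᵥ a = 0 := by rw [star_dotProduct, haa', star_zero]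
  have hb'b : star b' ⬝ᵥ b = 0 := by rw [star_dotProduct, hbb', star_zero]
  simp only [hsplit, star_add, star_smul, add_dotProduct, dotProduct_add, smul_dotProduct,
    dotProduct_smul, star_prod_dotProduct_prod, ha, ha', haa', ha'a, hb, hb', hbb', hb'b,
    Complex.star_def, Complex.conj_ofReal, smul_eq_mul, Real.cos_sub]
  push_cast
  ring

end Schmidt

open Real in
theorem overlap_identity_general (m : ℕ) (p : Fin m → ℝ)
    (a aperp b bperp : Fin m → Fin 2 → ℂ)
    (ha : ∀ i, star (a i) ⬝ᵥ a i = 1) (haperp : ∀ i, star (aperp i) ⬝ᵥ aperp i = 1)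
    (hab : ∀ i, star (a i) ⬝ᵥ aperp i = 0)
    (hb : ∀ i, star (b i) ⬝ᵥ b i = 1) (hbperp : ∀ i, star (bperp i) ⬝ᵥ bperp i = 1)
    (hbb : ∀ i, star (b i) ⬝ᵥ bperp i = 0)
    (hp : ∀ i, 0 ≤ p i) (hpsum : (∑ i, p i) = 1)
    (α βt : ℝ)
    (ψ φ : Fin m → (Fin 2 × Fin 2 → ℂ))
    (hψ : ∀ i, ψ i = fun x => (Real.cos α : ℂ) * (a i x.1 * b i x.2)
        + (Real.sin α : ℂ) * (aperp i x.1 * bperp i x.2))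
    (hφ : ∀ i, φ i = fun x => (Real.cos βt : ℂ) * (a i x.1 * b i x.2)
        + (Real.sin βt : ℂ) * (aperp i x.1 * bperp i x.2))
    (o : Fin m → ℂ) (ho : ∀ i, o i = star (ψ i) ⬝ᵥ φ i)
    (q : Fin m → ℝ)
    (hq : ∀ i, q i = p i * ‖o i‖ ^ 2 / ∑ j, p j * ‖o j‖ ^ 2)
    (ρ ρmin : Q2)
    (hρ : ρ = ∑ i, p i • vecMulVec (ψ i) (star (ψ i)))
    (hρmin : ρmin = ∑ i, q i • vecMulVec (φ i) (star (φ i))) :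
    (∑ i, Real.sqrt (p i * q i) * ‖o i‖) ≤ Real.sqrt (fid ρ ρmin) ∧
    (∑ i, Real.sqrt (p i * q i) * ‖o i‖)
      = Real.sqrt (∑ i, p i * ‖o i‖ ^ 2) ∧
    Real.sqrt (∑ i, p i * ‖o i‖ ^ 2) = |Real.cos (α - βt)| := by
  have hq0 : ∀ i, 0 ≤ q i := fun i => by
    rw [hq i]
    exact div_nonneg (mul_nonneg (hp i) (sq_nonneg _))
      (Finset.sum_nonneg fun j _ => mul_nonneg (hp j) (sq_nonneg _))
  have hoc : ∀ i, o i = (cos (α - βt) : ℂ) := fun i => by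
    rw [ho i, hψ i, hφ i]
    exact star_schmidtVec_dotProduct_schmidtVec (ha i) (haperp i) (hab i) (hb i) (hbperp i)
      (hbb i) α βt
  have hmid : ∑ i, √(p i * q i) * ‖o i‖ = √(∑ i, p i * ‖o i‖ ^ 2) := by
    simp only [hq]
    exact sum_sqrt_mul_reweighted_eq_sqrt_sum hp fun i => norm_nonneg (o i)
  refine ⟨?_, hmid, ?_⟩
  · have hw : 0 ≤ ∑ i, √(p i * q i) := Finset.sum_nonneg fun i _ => Real.sqrt_nonneg _
    calc ∑ i, √(p i * q i) * ‖o i‖ = ‖∑ i, (√(p i * q i) : ℂ) * (star (ψ i) ⬝ᵥ φ i)‖ := by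
          simp only [← ho, hoc, ← Finset.sum_mul, ← Complex.ofReal_sum, norm_mul,
            Complex.norm_real, Real.norm_of_nonneg hw]
      _ ≤ √(fid ρ ρmin) := by
          rw [hρ, hρmin]
          exact norm_sum_sqrt_mul_dotProduct_le_sqrt_fid hp hq0 ψ φ
  · simp only [hoc, Complex.norm_real, Real.norm_eq_abs, sq_abs, ← Finset.sum_mul, hpsum,
      one_mul, Real.sqrt_sq_eq_abs]

open Real in
/-- Overlap identity for matched pure-state ensembles: with
`|ψᵢ⟩ = cos α |aᵢbᵢ⟩ + sin α |aᵢ⊥bᵢ⊥⟩`, `|φᵢ⟩ = cos β̃ |aᵢbᵢ⟩ + sin β̃ |aᵢ⊥bᵢ⊥⟩`, and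
`ρ_min = Σᵢ qᵢ |φᵢ⟩⟨φᵢ|` with `qᵢ ∝ pᵢ|⟨ψᵢ|φᵢ⟩|²`, one has
`√F(ρ,ρ_min) ≥ Σᵢ √(pᵢqᵢ)|⟨ψᵢ|φᵢ⟩| = √(Σᵢ pᵢ|⟨ψᵢ|φᵢ⟩|²) = |cos(α − β̃)|`. -/
theorem overlap_identity (m : ℕ) (p : Fin m → ℝ)
    (a aperp b bperp : Fin m → Fin 2 → ℂ)
    (ha : ∀ i, star (a i) ⬝ᵥ a i = 1) (haperp : ∀ i, star (aperp i) ⬝ᵥ aperp i = 1)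
    (hab : ∀ i, star (a i) ⬝ᵥ aperp i = 0)
    (hb : ∀ i, star (b i) ⬝ᵥ b i = 1) (hbperp : ∀ i, star (bperp i) ⬝ᵥ bperp i = 1)
    (hbb : ∀ i, star (b i) ⬝ᵥ bperp i = 0)
    (hp : ∀ i, 0 ≤ p i) (hpsum : (∑ i, p i) = 1)
    (α βt : ℝ) (hα : α ∈ Set.Icc 0 (π / 4)) (hβt : βt ∈ Set.Icc 0 (π / 4))
    (ψ φ : Fin m → (Fin 2 × Fin 2 → ℂ))
    (hψ : ∀ i, ψ i = fun x => (Real.cos α : ℂ) * (a i x.1 * b i x.2)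
        + (Real.sin α : ℂ) * (aperp i x.1 * bperp i x.2))
    (hφ : ∀ i, φ i = fun x => (Real.cos βt : ℂ) * (a i x.1 * b i x.2)
        + (Real.sin βt : ℂ) * (aperp i x.1 * bperp i x.2))
    (o : Fin m → ℂ) (ho : ∀ i, o i = star (ψ i) ⬝ᵥ φ i)
    (q : Fin m → ℝ)
    (hq : ∀ i, q i = p i * ‖o i‖ ^ 2 / ∑ j, p j * ‖o j‖ ^ 2)
    (ρ ρmin : Q2)
    (hρ : ρ = ∑ i, p i • vecMulVec (ψ i) (star (ψ i)))
    (hρmin : ρmin = ∑ i, q i • vecMulVec (φ i) (star (φ i))) :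
    (∑ i, Real.sqrt (p i * q i) * ‖o i‖) ≤ Real.sqrt (fid ρ ρmin) ∧
    (∑ i, Real.sqrt (p i * q i) * ‖o i‖)
      = Real.sqrt (∑ i, p i * ‖o i‖ ^ 2) ∧
    Real.sqrt (∑ i, p i * ‖o i‖ ^ 2) = |Real.cos (α - βt)| :=
  overlap_identity_general m p a aperp b bperp ha haperp hab hb hbperp hbb hp hpsum α βt ψ φ hψ hφ o
    ho q hq ρ ρmin hρ hρmin
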